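/- arXiv:1309.5493 — 3 statements merged into one kernel-verified Lean document; each statement's English description precedes it below -/
import Mathlib

section
/- Let f : ℝ → ℝ be C⁴ near a simple root α with f'(α) ≠ 0, let x = α + e, and let y = x - f(x)/f'(x) be the Newton iterate. Then f'(y)/f'(x) = 1 - 2c₂e + (6c₂² - 3c₃)e² + O(e³) as e → 0, where c_k = f^{(k)}(α)/(k! f'(α)). -/
open Filter Asymptotics Topology Finset Nat Metric

/-! By Taylor's theorem, `f (α + e) = A (e + c₂ e²) + O(e³)` and
`f' (α + e) = A (1 + 2 c₂ e + 3 c₃ e²) + O(e³)` with `A = f' α ≠ 0`. Dividing the first by the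
second shows that the Newton iterate is `y = α + c₂ e² + O(e³)`, hence
`f' y = A (1 + 2 c₂² e²) + O(e³)`. Since `f' (α + e)` stays away from `0`, the ratio can be
expanded by comparing `f' y` with `(1 - 2 c₂ e + (6 c₂² - 3 c₃) e²) f' (α + e)`. -/

theorem ContDiffAt.isBigO_sub_taylor {E : Type*} [NormedAddCommGroup E] [NormedSpace ℝ E]
    {g : ℝ → E} {a : ℝ} {n : ℕ} (hg : ContDiffAt ℝ (n + 1) g a) :
    (fun h => g (a + h) - ∑ k ∈ range (n + 1), ((k ! : ℝ)⁻¹ * h ^ k) • iteratedDeriv k g a)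
      =O[𝓝 0] (· ^ (n + 1)) := by
  obtain ⟨u, hu, hgu⟩ := hg.contDiffOn le_rfl (by simp)
  obtain ⟨ε, hε, hball⟩ := Metric.mem_nhds_iff.mp hu
  have ha : a ∈ ball a ε := mem_ball_self hε
  have hsmall :=
    taylor_isLittleO (convex_ball a ε) ha (n := n + 1) (by exact_mod_cast hgu.mono hball)
  rw [isOpen_ball.nhdsWithin_eq ha] at hsmall
  -- the order-`(n + 1)` polynomial is `o((x - a)ⁿ⁺¹)`-close; its top term is only `O((x - a)ⁿ⁺¹)`
  have hlast : (fun x => (((n + 1 : ℝ) * n !)⁻¹ * (x - a) ^ (n + 1)) •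
      iteratedDerivWithin (n + 1) g (ball a ε) a) =O[𝓝 a] fun x => (x - a) ^ (n + 1) := by
    refine .of_bound (‖((n + 1 : ℝ) * n !)⁻¹‖ * ‖iteratedDerivWithin (n + 1) g (ball a ε) a‖)
      (.of_forall fun x => le_of_eq ?_)
    rw [norm_smul, norm_mul]; ring
  have hshift : Tendsto (fun h => a + h) (𝓝 0) (𝓝 a) := by
    simpa using (continuous_const_add a).tendsto 0
  refine ((hsmall.isBigO.add hlast).comp_tendsto hshift).congr (fun h => ?_) (fun h => by simp)
  simp only [Function.comp_apply, taylorWithinEval_succ, taylor_within_apply, add_sub_cancel_left,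
    iteratedDerivWithin_of_isOpen isOpen_ball ha]
  abel

lemma ContinuousAt.isBigO_mul_left {X : Type*} [TopologicalSpace X] {p g : X → ℝ} {a : X}
    (hp : ContinuousAt p a) :
    (fun x => p x * g x) =O[𝓝 a] g := by
  simpa using (hp.tendsto.isBigO_one ℝ).mul (isBigO_refl g (𝓝 a))

lemma Asymptotics.IsBigO.div_of_tendsto {α : Type*} {l : Filter α} {u v D : α → ℝ} {A : ℝ}
    (huv : u =O[l] v) (hD : Tendsto D l (𝓝 A)) (hA : A ≠ 0) :
    (fun x => u x / D x) =O[l] v := by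
  simpa [div_eq_mul_inv] using huv.mul ((hD.inv₀ hA).isBigO_one ℝ)

lemma ContDiffAt.isBigO_sub_quadratic {g : ℝ → ℝ} {a : ℝ} (hg : ContDiffAt ℝ 3 g a) :
    (fun h => g (a + h) - (g a + deriv g a * h + iteratedDeriv 2 g a / 2 * h ^ 2))
      =O[𝓝 0] (· ^ 3) := by
  refine (hg : ContDiffAt ℝ (2 + 1) g a).isBigO_sub_taylor.congr_left fun h => ?_
  simp only [reduceAdd, smul_eq_mul, sum_range_succ, range_one, sum_singleton, factorial_zero,
    cast_one, inv_one, pow_zero, mul_one, iteratedDeriv_zero, one_mul, factorial_one, pow_one,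
    iteratedDeriv_one, factorial_two, cast_ofNat, sub_right_inj]
  ring

section NewtonStep

variable {F D : ℝ → ℝ} {A c₂ c₃ : ℝ}

lemma tendsto_of_isBigO_sub_quadratic
    (hD : (fun e => D e - A * (1 + 2 * c₂ * e + 3 * c₃ * e ^ 2)) =O[𝓝 0] (· ^ 3)) :
    Tendsto D (𝓝 0) (𝓝 A) := by
  have hrem : Tendsto (fun e => D e - A * (1 + 2 * c₂ * e + 3 * c₃ * e ^ 2)) (𝓝 0) (𝓝 0) :=
    hD.trans_tendsto ((continuous_pow 3).tendsto' 0 0 (by simp))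
  have hpoly : Tendsto (fun e : ℝ => A * (1 + 2 * c₂ * e + 3 * c₃ * e ^ 2)) (𝓝 0) (𝓝 A) :=
    (by fun_prop : Continuous fun e : ℝ => A * (1 + 2 * c₂ * e + 3 * c₃ * e ^ 2)).tendsto' _ _
      (by simp)
  simpa using hrem.add hpoly

variable (hA : A ≠ 0) (hF : (fun e => F e - A * (e + c₂ * e ^ 2)) =O[𝓝 0] (· ^ 3))
  (hD : (fun e => D e - A * (1 + 2 * c₂ * e + 3 * c₃ * e ^ 2)) =O[𝓝 0] (· ^ 3))
include hA hF hD

lemma isBigO_newton_step_sub_sq :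
    (fun e => e - F e / D e - c₂ * e ^ 2) =O[𝓝 0] (· ^ 3) := by
  have hDA := tendsto_of_isBigO_sub_quadratic hD
  have hnum : (fun e => (e - c₂ * e ^ 2) * D e - F e) =O[𝓝 0] (· ^ 3) := by
    have hpoly : (fun e : ℝ => A * (3 * c₃ - 2 * c₂ ^ 2 - 3 * c₂ * c₃ * e) * e ^ 3)
        =O[𝓝 0] (· ^ 3) :=
      (by fun_prop : ContinuousAt
        (fun e : ℝ => A * (3 * c₃ - 2 * c₂ ^ 2 - 3 * c₂ * c₃ * e)) 0).isBigO_mul_left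
    have hDe :=
      (by fun_prop : ContinuousAt (fun e : ℝ => e - c₂ * e ^ 2) 0).isBigO_mul_left.trans hD
    exact ((hDe.sub hF).add hpoly).congr_left fun e => by ring
  refine (hnum.div_of_tendsto hDA hA).congr' ?_ .rfl
  filter_upwards [hDA.eventually_ne hA] with e he
  field_simp
  ring

lemma isBigO_deriv_ratio_newton_step :
    (fun e => D (e - F e / D e) / D e - (1 - 2 * c₂ * e + (6 * c₂ ^ 2 - 3 * c₃) * e ^ 2))
      =O[𝓝 0] (· ^ 3) := by
  set w := fun e => e - F e / D e
  have hDA := tendsto_of_isBigO_sub_quadratic hD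
  have hw3 : (fun e => w e - c₂ * e ^ 2) =O[𝓝 0] (· ^ 3) := isBigO_newton_step_sub_sq hA hF hD
  have hw : w =O[𝓝 0] (· ^ 2) := by
    simpa using (hw3.trans (isLittleO_pow_pow (by norm_num)).isBigO).add
      ((isBigO_refl (· ^ 2) (𝓝 (0 : ℝ))).const_mul_left c₂)
  have hwe : w =O[𝓝 0] fun e => e := by
    simpa using hw.trans (isLittleO_pow_pow (𝕜 := ℝ) (m := 1) (by norm_num)).isBigO
  have hw0 : Tendsto w (𝓝 0) (𝓝 0) := hwe.trans_tendsto tendsto_id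
  have hDw : (fun e => D (w e) - A * (1 + 2 * c₂ * w e + 3 * c₃ * w e ^ 2)) =O[𝓝 0] (· ^ 3) :=
    (hD.comp_tendsto hw0).trans (hwe.pow 3)
  have hwsq : (fun e => w e ^ 2) =O[𝓝 0] (· ^ 3) := by
    simpa only [← pow_succ, ← sq] using hw.mul hwe
  have hnum : (fun e => D (w e) - (1 - 2 * c₂ * e + (6 * c₂ ^ 2 - 3 * c₃) * e ^ 2) * D e)
      =O[𝓝 0] (· ^ 3) := by
    -- the polynomial part `A (1 + 2 c₂² e²) - (1 - 2 c₂ e + …) A (1 + 2 c₂ e + 3 c₃ e²)`: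
    -- its terms of degree `< 3` cancel
    have hpoly : (fun e : ℝ =>
        A * (12 * c₂ * c₃ - 12 * c₂ ^ 3 - 3 * c₃ * (6 * c₂ ^ 2 - 3 * c₃) * e) * e ^ 3)
        =O[𝓝 0] (· ^ 3) :=
      (by fun_prop : ContinuousAt
        (fun e : ℝ => A * (12 * c₂ * c₃ - 12 * c₂ ^ 3 - 3 * c₃ * (6 * c₂ ^ 2 - 3 * c₃) * e)) 0
        ).isBigO_mul_left
    have hQ := (by fun_prop : ContinuousAt
      (fun e : ℝ => 1 - 2 * c₂ * e + (6 * c₂ ^ 2 - 3 * c₃) * e ^ 2) 0).isBigO_mul_left.trans hD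
    have hPw := (hw3.const_mul_left (2 * A * c₂)).add (hwsq.const_mul_left (3 * A * c₃))
    exact (((hDw.add hPw).sub hQ).add hpoly).congr_left fun e => by ring
  refine (hnum.div_of_tendsto hDA hA).congr' ?_ .rfl
  filter_upwards [hDA.eventually_ne hA] with e he
  rw [sub_div, mul_div_cancel_right₀ _ he]

end NewtonStep

/-- `f'(y)/f'(x) = 1 - 2c₂e + (6c₂² - 3c₃)e² + O(e³)` for the Newton iterate `y`. -/
theorem deriv_ratio_expansion (f : ℝ → ℝ) (α : ℝ)
    (hf : ContDiffAt ℝ 4 f α) (hroot : f α = 0) (hd : deriv f α ≠ 0) :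
    (fun e : ℝ =>
        deriv f ((α + e) - f (α + e) / deriv f (α + e)) / deriv f (α + e)
          - (1 - 2 * (iteratedDeriv 2 f α / ((Nat.factorial 2 : ℝ) * deriv f α)) * e
              + (6 * (iteratedDeriv 2 f α / ((Nat.factorial 2 : ℝ) * deriv f α)) ^ 2
                  - 3 * (iteratedDeriv 3 f α / ((Nat.factorial 3 : ℝ) * deriv f α))) * e ^ 2))
      =O[nhds 0] fun e : ℝ => e ^ 3 := by
  set c₂ := iteratedDeriv 2 f α / ((2 ! : ℝ) * deriv f α)
  set c₃ := iteratedDeriv 3 f α / ((3 ! : ℝ) * deriv f α)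
  have hF : (fun e => f (α + e) - deriv f α * (e + c₂ * e ^ 2)) =O[𝓝 0] (· ^ 3) :=
    (hf.of_le (by norm_num)).isBigO_sub_quadratic.congr_left fun e => by
      simp only [hroot, c₂, factorial_two, cast_ofNat, zero_add]
      field_simp
  have hd2 : deriv (deriv f) = iteratedDeriv 2 f := by rw [iteratedDeriv_succ, iteratedDeriv_one]
  have hD : (fun e => deriv f (α + e) - deriv f α * (1 + 2 * c₂ * e + 3 * c₃ * e ^ 2))
      =O[𝓝 0] (· ^ 3) :=
    (hf.derivWithin (by norm_num)).isBigO_sub_quadratic.congr_left fun e => by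
      simp only [hd2, ← iteratedDeriv_succ', reduceAdd, factorial, succ_eq_add_one, zero_add,
        mul_one, cast_ofNat, reduceMul, sub_right_inj, c₂, c₃]
      field_simp
      ring
  simpa only [add_sub_assoc] using isBigO_deriv_ratio_newton_step hd hF hD
end

section
/- Let f : ℝ → ℝ be C⁵ near a simple root α with f'(α) ≠ 0. Define the iteration: y = x - (2/3)·f(x)/f'(x), t = f'(y)/f'(x), and x_new = x - (1/2)(3 - t)·(9/4 - (9/4)t + t²)·f(x)/f'(x). Then for x = α + e with e small, x_new - α = O(e⁴); i.e., this weighted method has fourth-order convergence. -/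
/-!
Write `f (α + e) / f' α = e + q e² + r e³ + O(e⁴)`, so that
`f' (α + e) / f' α = 1 + 2 q e + 3 r e² + O(e³)`. Dividing, the Newton correction `u = f / f'`
is `U(e) + O(e⁴)`, and the ratio `t = f'(y) / f'(x)` is `T(e) + O(e³)`, for explicit polynomials
`U`, `T` in `e` with coefficients in `q, r`. The weight is smooth and `u = O(e)`, so the new error
`e - weight(t) u` equals the polynomial `e - weight(T(e)) U(e)` up to `O(e⁴)`, and with the
weights `9/4, -9/4, 1` its coefficients of `e⁰, …, e³` vanish identically in `q, r`.
-/

open Filter Asymptotics Topology Finset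

theorem ContDiffAt.isBigO_sub_taylor_s4 {f : ℝ → ℝ} {x₀ : ℝ} {n : ℕ} (hf : ContDiffAt ℝ n f x₀) :
    (fun e => f (x₀ + e) - ∑ k ∈ range n, iteratedDeriv k f x₀ / (k.factorial : ℝ) * e ^ k)
      =O[𝓝 0] (· ^ n) := by
  obtain ⟨u, hu, hfu⟩ := hf.contDiffOn le_rfl (by simp)
  obtain ⟨ε, hε, hball⟩ := Metric.mem_nhds_iff.mp hu
  have hx₀ := Metric.mem_ball_self (x := x₀) hε
  have htaylor := taylor_isLittleO (convex_ball x₀ ε) hx₀ (hfu.mono hball)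
  rw [Metric.isOpen_ball.nhdsWithin_eq hx₀] at htaylor
  have hshift : Tendsto (x₀ + ·) (𝓝 0) (𝓝 x₀) := by
    simpa using (continuous_const_add x₀).tendsto 0
  have hrem := (htaylor.comp_tendsto hshift).isBigO
  simp only [Function.comp_def, add_sub_cancel_left] at hrem
  have hlast : (fun e : ℝ => iteratedDeriv n f x₀ / (n.factorial : ℝ) * e ^ n) =O[𝓝 0] (· ^ n) :=
    isBigO_const_mul_self _ _ _
  have hterm (k : ℕ) (e : ℝ) :
      ((k.factorial : ℝ)⁻¹ * (x₀ + e - x₀) ^ k) • iteratedDerivWithin k f (Metric.ball x₀ ε) x₀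
        = iteratedDeriv k f x₀ / (k.factorial : ℝ) * e ^ k := by
    rw [iteratedDerivWithin_of_isOpen Metric.isOpen_ball hx₀, add_sub_cancel_left, smul_eq_mul]
    ring
  refine (hrem.add hlast).congr_left fun e => ?_
  simp only [taylor_within_apply, sum_range_succ, hterm]
  ring

section

variable {α : Type*} {l : Filter α}

theorem Asymptotics.IsBigO.mul_tendsto {f g c : α → ℝ} {γ : ℝ} (h : f =O[l] g)
    (hc : Tendsto c l (𝓝 γ)) : (fun x => c x * f x) =O[l] g :=
  ((hc.isBigO_one ℝ).mul h).congr_right fun _ => one_mul _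

theorem isBigO_div_sub_of_isBigO_sub_mul {a b c g : α → ℝ} {β : ℝ} (hb : Tendsto b l (𝓝 β))
    (hβ : β ≠ 0) (h : (fun x => a x - c x * b x) =O[l] g) :
    (fun x => a x / b x - c x) =O[l] g := by
  refine (h.mul_tendsto (hb.inv₀ hβ)).congr' ?_ EventuallyEq.rfl
  filter_upwards [hb.eventually_ne hβ] with x hx
  field_simp

theorem ContDiffAt.isBigO_comp_sub_comp {𝕜 E F : Type*} [RCLike 𝕜] [NormedAddCommGroup E]
    [NormedSpace 𝕜 E] [NormedAddCommGroup F] [NormedSpace 𝕜 F] {h : E → F} {y : E}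
    (hh : ContDiffAt 𝕜 1 h y) {a b : α → E} (ha : Tendsto a l (𝓝 y)) (hb : Tendsto b l (𝓝 y)) :
    (fun x => h (a x) - h (b x)) =O[l] fun x => a x - b x :=
  (hh.hasStrictFDerivAt one_ne_zero).isBigO_sub.comp_tendsto (ha.prodMk_nhds hb)

end

theorem isBigO_pow_mul {c : ℝ → ℝ} (hc : ContinuousAt c 0) (n : ℕ) :
    (fun e => e ^ n * c e) =O[𝓝 0] (· ^ n) := by
  simpa only [mul_comm] using (isBigO_refl (· ^ n) (𝓝 (0 : ℝ))).mul_tendsto hc.tendsto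

theorem tendsto_of_isBigO_sub_pow {f p : ℝ → ℝ} {n : ℕ} (hn : n ≠ 0)
    (h : (fun e => f e - p e) =O[𝓝 0] (· ^ n)) (hp : ContinuousAt p 0) :
    Tendsto f (𝓝 0) (𝓝 (p 0)) := by
  have hpow : Tendsto (· ^ n) (𝓝 (0 : ℝ)) (𝓝 0) := by
    simpa [zero_pow hn] using (continuous_pow n).tendsto (0 : ℝ)
  simpa using (h.trans_tendsto hpow).add hp.tendsto

namespace WeightedFourthOrder

noncomputable def weight (t : ℝ) : ℝ := 1 / 2 * (3 - t) * (9 / 4 - 9 / 4 * t + t ^ 2)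

/-- The expansions of `f / f'` and of `f'(y) / f'(x)` in the error `e`, to the orders that matter,
with `q = f'' / (2 f')` and `r = f''' / (6 f')` at the root. -/
noncomputable def correctionApprox (q r e : ℝ) : ℝ := e - q * e ^ 2 + (2 * q ^ 2 - 2 * r) * e ^ 3

noncomputable def derivRatioApprox (q r e : ℝ) : ℝ :=
  1 - 4 / 3 * q * e + (4 * q ^ 2 - 8 / 3 * r) * e ^ 2

section

variable {q r : ℝ}

theorem continuous_derivRatioApprox : Continuous (derivRatioApprox q r) := by
  unfold derivRatioApprox; fun_prop

theorem isBigO_correctionApprox : (correctionApprox q r) =O[𝓝 0] (· ^ 1) :=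
  (isBigO_pow_mul (c := fun e => 1 - q * e + (2 * q ^ 2 - 2 * r) * e ^ 2) (by fun_prop)
    1).congr_left fun e => by simp only [correctionApprox]; ring

theorem isBigO_pow_one_of_isBigO_sub_correctionApprox {u : ℝ → ℝ}
    (hu : (fun e => u e - correctionApprox q r e) =O[𝓝 0] (· ^ 4)) : u =O[𝓝 0] (· ^ 1) :=
  ((hu.trans (isLittleO_pow_pow (by norm_num : 1 < 4)).isBigO).add
    isBigO_correctionApprox).congr_left fun e => by ring

theorem isBigO_div_sub_correctionApprox {φ ψ : ℝ → ℝ}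
    (hφ : (fun e => φ e - (e + q * e ^ 2 + r * e ^ 3)) =O[𝓝 0] (· ^ 4))
    (hψ : (fun e => ψ e - (1 + 2 * q * e + 3 * r * e ^ 2)) =O[𝓝 0] (· ^ 3)) :
    (fun e => φ e / ψ e - correctionApprox q r e) =O[𝓝 0] (· ^ 4) := by
  have hψ1 : Tendsto ψ (𝓝 0) (𝓝 1) := by
    simpa using tendsto_of_isBigO_sub_pow three_ne_zero hψ (by fun_prop)
  refine isBigO_div_sub_of_isBigO_sub_mul hψ1 one_ne_zero ?_
  have hprod : (fun e => correctionApprox q r e * (ψ e - (1 + 2 * q * e + 3 * r * e ^ 2)))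
      =O[𝓝 0] (· ^ 4) :=
    (isBigO_correctionApprox.mul hψ).congr_right fun e => by ring
  have hrem := isBigO_pow_mul
    (c := fun e => 7 * q * r - 4 * q ^ 3 + (6 * r ^ 2 - 6 * q ^ 2 * r) * e) (by fun_prop) 4
  refine ((hφ.sub hprod).add hrem).congr_left fun e => ?_
  simp only [correctionApprox]
  ring

theorem isBigO_derivRatio_sub_derivRatioApprox {ψ u : ℝ → ℝ}
    (hψ : (fun e => ψ e - (1 + 2 * q * e + 3 * r * e ^ 2)) =O[𝓝 0] (· ^ 3))
    (hu : (fun e => u e - correctionApprox q r e) =O[𝓝 0] (· ^ 4)) :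
    (fun e => ψ (e - 2 / 3 * u e) / ψ e - derivRatioApprox q r e) =O[𝓝 0] (· ^ 3) := by
  set Ψ : ℝ → ℝ := fun e => 1 + 2 * q * e + 3 * r * e ^ 2
  have hψ1 : Tendsto ψ (𝓝 0) (𝓝 1) := by
    simpa [Ψ] using tendsto_of_isBigO_sub_pow three_ne_zero hψ (by fun_prop)
  have hz : (fun e => e - 2 / 3 * u e) =O[𝓝 0] (· ^ 1) :=
    ((isBigO_refl _ _).congr_right fun e => (pow_one e).symm).sub
      ((isBigO_pow_one_of_isBigO_sub_correctionApprox hu).const_mul_left _)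
  have hz0 : Tendsto (fun e => e - 2 / 3 * u e) (𝓝 0) (𝓝 0) :=
    hz.trans_tendsto (by simpa using (continuous_pow 1).tendsto (0 : ℝ))
  have hZ0 : Tendsto (fun e => e - 2 / 3 * correctionApprox q r e) (𝓝 0) (𝓝 0) := by
    have : Continuous fun e => e - 2 / 3 * correctionApprox q r e := by
      unfold correctionApprox; fun_prop
    simpa [correctionApprox] using this.tendsto 0
  have hTaylor : (fun e => ψ (e - 2 / 3 * u e) - Ψ (e - 2 / 3 * u e)) =O[𝓝 0] (· ^ 3) :=
    (hψ.comp_tendsto hz0).trans ((hz.pow 3).congr_right fun e => by ring)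
  have hswap : (fun e => Ψ (e - 2 / 3 * u e) - Ψ (e - 2 / 3 * correctionApprox q r e))
      =O[𝓝 0] (· ^ 3) := by
    have hΨ : ContDiffAt ℝ 1 Ψ 0 := by simp only [Ψ]; fun_prop
    refine ((hΨ.isBigO_comp_sub_comp hz0 hZ0).trans ?_).trans
      (isLittleO_pow_pow (by norm_num : 3 < 4)).isBigO
    exact (hu.const_mul_left (-2 / 3)).congr_left fun e => by ring
  have hrem := isBigO_pow_mul (c := fun e => 40 / 3 * q * r - 32 / 3 * q ^ 3
    + (32 / 3 * r ^ 2 - 40 / 3 * q ^ 2 * r) * e + (16 / 3 * q * r ^ 2 - 16 / 3 * q ^ 3 * r) * e ^ 2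
    + (16 / 3 * r ^ 3 - 32 / 3 * q ^ 2 * r ^ 2 + 16 / 3 * q ^ 4 * r) * e ^ 3) (by fun_prop) 3
  have hTψ := hψ.mul_tendsto (continuous_derivRatioApprox (q := q) (r := r)).continuousAt.tendsto
  refine isBigO_div_sub_of_isBigO_sub_mul hψ1 one_ne_zero ?_
  refine (((hTaylor.add hswap).add hrem).sub hTψ).congr_left fun e => ?_
  simp only [Ψ, correctionApprox, derivRatioApprox]
  ring

theorem isBigO_sub_weight_mul {u t : ℝ → ℝ}
    (hu : (fun e => u e - correctionApprox q r e) =O[𝓝 0] (· ^ 4))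
    (ht : (fun e => t e - derivRatioApprox q r e) =O[𝓝 0] (· ^ 3)) :
    (fun e => e - weight (t e) * u e) =O[𝓝 0] (· ^ 4) := by
  have hT1 : Tendsto (derivRatioApprox q r) (𝓝 0) (𝓝 1) := by
    simpa [derivRatioApprox] using continuous_derivRatioApprox.tendsto (0 : ℝ)
  have ht1 : Tendsto t (𝓝 0) (𝓝 1) := by
    simpa [derivRatioApprox] using
      tendsto_of_isBigO_sub_pow three_ne_zero ht continuous_derivRatioApprox.continuousAt
  have hweight : (fun e => weight (t e) - weight (derivRatioApprox q r e)) =O[𝓝 0] (· ^ 3) :=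
    (ContDiffAt.isBigO_comp_sub_comp (by unfold weight; fun_prop) ht1 hT1).trans ht
  have hWT : Tendsto (fun e => weight (derivRatioApprox q r e)) (𝓝 0) (𝓝 (weight 1)) :=
    ((by unfold weight; fun_prop : Continuous weight).tendsto 1).comp hT1
  -- `(e - weight (derivRatioApprox q r e) * correctionApprox q r e) / e ^ 4`
  have hrem := isBigO_pow_mul (c := fun e => -4 * q * r + 211 / 27 * q ^ 3
    + (-4 * r ^ 2 + 170 / 9 * q ^ 2 * r - 436 / 27 * q ^ 4) * e
    + (88 / 9 * q * r ^ 2 - 320 / 27 * q ^ 3 * r - 82 / 27 * q ^ 5) * e ^ 2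
    + (176 / 27 * r ^ 3 + 64 / 9 * q ^ 2 * r ^ 2 - 524 / 9 * q ^ 4 * r + 148 / 3 * q ^ 6) * e ^ 3
    + (1024 / 27 * q * r ^ 3 - 1408 / 9 * q ^ 3 * r ^ 2 + 640 / 3 * q ^ 5 * r - 96 * q ^ 7) * e ^ 4
    + (512 / 27 * r ^ 4 - 2816 / 27 * q ^ 2 * r ^ 3 + 640 / 3 * q ^ 4 * r ^ 2 - 192 * q ^ 6 * r
      + 64 * q ^ 8) * e ^ 5) (by fun_prop) 4
  have hprod : (fun e => (weight (t e) - weight (derivRatioApprox q r e)) * u e)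
      =O[𝓝 0] (· ^ 4) :=
    (hweight.mul (isBigO_pow_one_of_isBigO_sub_correctionApprox hu)).congr_right fun e => by ring
  refine ((hrem.sub (hu.mul_tendsto hWT)).sub hprod).congr_left fun e => ?_
  simp only [weight, correctionApprox, derivRatioApprox]
  ring

end

section

variable {f : ℝ → ℝ} {α : ℝ}

theorem isBigO_div_deriv_sub_taylor (hf : ContDiffAt ℝ 4 f α) (hroot : f α = 0)
    (hd : deriv f α ≠ 0) :
    (fun e => f (α + e) / deriv f α - (e + iteratedDeriv 2 f α / (2 * deriv f α) * e ^ 2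
      + iteratedDeriv 3 f α / (6 * deriv f α) * e ^ 3)) =O[𝓝 0] (· ^ 4) := by
  refine (hf.isBigO_sub_taylor_s4.const_mul_left (deriv f α)⁻¹).congr_left fun e => ?_
  simp only [sum_range_succ, range_zero, sum_empty, iteratedDeriv_zero, iteratedDeriv_one, hroot]
  field_simp
  norm_num [Nat.factorial]
  ring

theorem isBigO_deriv_div_deriv_sub_taylor (hf : ContDiffAt ℝ 4 f α) (hd : deriv f α ≠ 0) :
    (fun e => deriv f (α + e) / deriv f α - (1 + 2 * (iteratedDeriv 2 f α / (2 * deriv f α)) * e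
      + 3 * (iteratedDeriv 3 f α / (6 * deriv f α)) * e ^ 2)) =O[𝓝 0] (· ^ 3) := by
  have hf' : ContDiffAt ℝ 3 (deriv f) α := hf.derivWithin (by norm_num)
  refine (hf'.isBigO_sub_taylor_s4.const_mul_left (deriv f α)⁻¹).congr_left fun e => ?_
  simp only [sum_range_succ, range_zero, sum_empty, ← iteratedDeriv_succ']
  field_simp
  norm_num [Nat.factorial]
  ring

end

end WeightedFourthOrder

/-- The weighted fourth-order method (scalar case, β = 2/3, a₁ = 9/4, a₂ = -9/4, a₃ = 1):
`x_new - α = O(e⁴)`. -/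
theorem weighted_fourth_order_scalar (f : ℝ → ℝ) (α : ℝ)
    (hf : ContDiffAt ℝ 5 f α) (hroot : f α = 0) (hd : deriv f α ≠ 0) :
    (fun e : ℝ =>
        (α + e
            - (1 / 2)
              * (3 - deriv f ((α + e) - (2 / 3) * (f (α + e) / deriv f (α + e))) / deriv f (α + e))
              * (9 / 4
                  - (9 / 4) * (deriv f ((α + e) - (2 / 3) * (f (α + e) / deriv f (α + e)))
                      / deriv f (α + e))
                  + (deriv f ((α + e) - (2 / 3) * (f (α + e) / deriv f (α + e)))
                      / deriv f (α + e)) ^ 2)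
              * (f (α + e) / deriv f (α + e)))
          - α)
      =O[nhds 0] fun e : ℝ => e ^ 4 := by
  open WeightedFourthOrder in
  have hf4 : ContDiffAt ℝ 4 f α := hf.of_le (by norm_num)
  have hψ := isBigO_deriv_div_deriv_sub_taylor hf4 hd
  have hu := isBigO_div_sub_correctionApprox (isBigO_div_deriv_sub_taylor hf4 hroot hd) hψ
  have ht := isBigO_derivRatio_sub_derivRatioApprox hψ hu
  refine (isBigO_sub_weight_mul hu ht).congr_left fun e => ?_
  rw [div_div_div_cancel_right₀ hd, div_div_div_cancel_right₀ hd, ← add_sub_assoc, weight]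
  ring
end

section
/- Let F : ℝⁿ → ℝⁿ be C⁴ in a convex neighborhood of a root α with F' continuous and F'(α) invertible. Define the two-step iteration Y = X - [F'(X)]⁻¹F(X), X₊ = X - (1/2)(3I - [F'(X)]⁻¹F'(Y))·[F'(X)]⁻¹F(X). Then there exist constants δ > 0 and K > 0 such that for all X with ‖X - α‖ < δ, ‖X₊ - α‖ ≤ K‖X - α‖³; i.e., the multivariate Chun method has third-order convergence. -/
open ContinuousLinearMap Metric Filter Topology

/-!
Write `e = X - α`, `B = F'(X)⁻¹`, `v = B (F X)` and `Y = X - v`, so that the Chun iterate is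
`Y - ½ B (F'(X) - F'(Y)) v`. Expanding `F` around `X` at the root gives
`Y - α = ½ B F''(X)(e, e) + O(‖e‖³)`; in particular `v = e + O(‖e‖²)`. Expanding `F'` around `X`
gives `½ B (F'(X) - F'(Y)) v = ½ B F''(X)(v, v) + O(‖e‖³)`, and `F''(X)(v, v) - F''(X)(e, e)` is
`O(‖e‖³)`, so the quadratic terms cancel. All constants are uniform on a small ball around `α`,
where `F'` is invertible with bounded inverse and `F''` is Lipschitz.
-/

theorem ContinuousAt.eventually_isUnit_and_norm_ringInverse_lt {X R : Type*}
    [TopologicalSpace X] [NormedRing R] [HasSummableGeomSeries R] {A : X → R} {α : X}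
    (hA : ContinuousAt A α) (hunit : IsUnit (A α)) :
    ∀ᶠ x in 𝓝 α, IsUnit (A x) ∧ ‖Ring.inverse (A x)‖ < ‖Ring.inverse (A α)‖ + 1 := by
  have hinv : ContinuousAt (fun x ↦ Ring.inverse (A x)) α :=
    (hunit.unit_spec ▸ NormedRing.inverse_continuousAt hunit.unit).comp hA
  exact (hA.eventually (Units.isOpen.mem_nhds hunit)).and
    (hinv.norm.eventually (gt_mem_nhds (lt_add_one _)))

variable {E G : Type*} [NormedAddCommGroup E] [NormedSpace ℝ E]
  [NormedAddCommGroup G] [NormedSpace ℝ G]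

section Taylor

variable {s : Set E} {x y : E} {K : NNReal}

theorem Convex.norm_image_sub_sub_fderiv_le_of_lipschitzOnWith (hs : Convex ℝ s)
    {g : E → G} {g' : E → E →L[ℝ] G} (hg : ∀ z ∈ s, HasFDerivAt g (g' z) z)
    (hlip : LipschitzOnWith K g' s) (hx : x ∈ s) (hy : y ∈ s) :
    ‖g y - g x - g' x (y - x)‖ ≤ K * ‖y - x‖ ^ 2 := by
  have hseg : segment ℝ x y ⊆ s := hs.segment_subset hx hy
  have hderiv : ∀ z ∈ segment ℝ x y, HasFDerivWithinAt (fun w ↦ g w - g' x (w - x))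
      (g' z - g' x) (segment ℝ x y) z := fun z hz ↦
    ((hg z (hseg hz)).sub ((g' x).hasFDerivAt.comp z
      ((hasFDerivAt_id z).sub_const x))).hasFDerivWithinAt
  have hbound : ∀ z ∈ segment ℝ x y, ‖g' z - g' x‖ ≤ K * ‖y - x‖ := fun z hz ↦
    hlip.norm_sub_le_of_le (hseg hz) hx (norm_sub_le_of_mem_segment hz)
  have := (convex_segment x y).norm_image_sub_le_of_norm_hasFDerivWithin_le hderiv hbound
    (left_mem_segment ℝ x y) (right_mem_segment ℝ x y)
  rw [sub_self, map_zero, sub_zero, sub_right_comm] at this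
  linarith

theorem Convex.norm_image_sub_sub_fderiv_sub_half_le_of_lipschitzOnWith (hs : Convex ℝ s)
    {g : E → G} {g' : E → E →L[ℝ] G} {g'' : E → E →L[ℝ] E →L[ℝ] G}
    (hg : ∀ z ∈ s, HasFDerivAt g (g' z) z) (hg' : ∀ z ∈ s, HasFDerivAt g' (g'' z) z)
    (hlip : LipschitzOnWith K g'' s) (hsymm : ∀ v w, g'' x v w = g'' x w v)
    (hx : x ∈ s) (hy : y ∈ s) :
    ‖g y - g x - g' x (y - x) - (1 / 2 : ℝ) • g'' x (y - x) (y - x)‖ ≤ K * ‖y - x‖ ^ 3 := by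
  have hseg : segment ℝ x y ⊆ s := hs.segment_subset hx hy
  have hderiv : ∀ z ∈ segment ℝ x y, HasFDerivWithinAt
      (fun w ↦ g w - g x - g' x (w - x) - (1 / 2 : ℝ) • g'' x (w - x) (w - x))
      (g' z - g' x - g'' x (z - x)) (segment ℝ x y) z := by
    intro z hz
    have hsub : HasFDerivAt (fun w : E ↦ w - x) (ContinuousLinearMap.id ℝ E) z :=
      (hasFDerivAt_id z).sub_const x
    have hquad : HasFDerivAt (fun w ↦ (1 / 2 : ℝ) • g'' x (w - x) (w - x))
        (g'' x (z - x)) z := by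
      refine ((((g'' x).hasFDerivAt.comp z hsub).clm_apply hsub).const_smul
        (1 / 2 : ℝ)).congr_fderiv ?_
      ext w
      simp only [Function.comp_apply, smul_apply, add_apply, comp_apply, flip_apply,
        coe_id', id_eq, hsymm w (z - x)]
      module
    exact ((((hg z (hseg hz)).sub_const (g x)).sub ((g' x).hasFDerivAt.comp z hsub)).sub
      hquad).hasFDerivWithinAt
  have hbound : ∀ z ∈ segment ℝ x y, ‖g' z - g' x - g'' x (z - x)‖ ≤ K * ‖y - x‖ ^ 2 :=
    fun z hz ↦ (hs.norm_image_sub_sub_fderiv_le_of_lipschitzOnWith hg' hlip hx (hseg hz)).trans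
      (by gcongr; exact norm_sub_le_of_mem_segment hz)
  have := (convex_segment x y).norm_image_sub_le_of_norm_hasFDerivWithin_le hderiv hbound
    (left_mem_segment ℝ x y) (right_mem_segment ℝ x y)
  simp only [sub_self, map_zero, smul_zero, sub_zero] at this
  linarith

end Taylor

theorem ContDiffAt.exists_ball_forall_taylor_le {F : E → G} {α : E} (hF : ContDiffAt ℝ 3 F α) :
    ∃ r > 0, ∃ K : ℝ, ∀ x ∈ ball α r, ∀ y ∈ ball α r,
      ‖F y - F x - fderiv ℝ F x (y - x)
          - (1 / 2 : ℝ) • fderiv ℝ (fderiv ℝ F) x (y - x) (y - x)‖ ≤ K * ‖y - x‖ ^ 3 ∧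
      ‖fderiv ℝ F y - fderiv ℝ F x - fderiv ℝ (fderiv ℝ F) x (y - x)‖ ≤ K * ‖y - x‖ ^ 2 := by
  obtain ⟨K, t, ht, hlip⟩ := ((hF.fderiv_right (m := 2) (by norm_num)).fderiv_right (m := 1)
    (by norm_num)).exists_lipschitzOnWith
  obtain ⟨r, hr, hball⟩ := Metric.mem_nhds_iff.1 (inter_mem ht (hF.eventually (by simp)))
  have hC3 : ∀ z ∈ ball α r, ContDiffAt ℝ 3 F z := fun z hz ↦ (hball hz).2
  have hF1 : ∀ z ∈ ball α r, HasFDerivAt F (fderiv ℝ F z) z := fun z hz ↦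
    ((hC3 z hz).differentiableAt (by norm_num)).hasFDerivAt
  have hF2 : ∀ z ∈ ball α r, HasFDerivAt (fderiv ℝ F) (fderiv ℝ (fderiv ℝ F) z) z := fun z hz ↦
    (((hC3 z hz).fderiv_right (m := 2) (by norm_num)).differentiableAt (by norm_num)).hasFDerivAt
  have hlip' := hlip.mono fun z hz ↦ (hball hz).1
  refine ⟨r, hr, K, fun x hx y hy ↦ ⟨?_, ?_⟩⟩
  · exact (convex_ball α r).norm_image_sub_sub_fderiv_sub_half_le_of_lipschitzOnWith hF1 hF2
      hlip' ((hC3 x hx).isSymmSndFDerivAt (by norm_num)) hx hy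
  · exact (convex_ball α r).norm_image_sub_sub_fderiv_le_of_lipschitzOnWith hF2 hlip' hx hy

section ChunStep

variable {A A' : E →L[ℝ] E} {Q : E →L[ℝ] E →L[ℝ] E} {a x f : E} {C : ℝ}

theorem ContinuousLinearMap.ringInverse_apply_self (hA : IsUnit A) (w : E) :
    Ring.inverse A (A w) = w := by
  rw [← mul_apply_eq_comp, Ring.inverse_mul_cancel A hA, one_apply_eq_self]

theorem newton_step_sub_eq (hA : IsUnit A) :
    x - Ring.inverse A f - a = Ring.inverse A (A (x - a) - f) := by
  rw [map_sub, ringInverse_apply_self hA, sub_right_comm]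

theorem norm_newton_step_sub_le (hA : IsUnit A) (hB : ‖Ring.inverse A‖ ≤ C) (hQ : ‖Q‖ ≤ C)
    (hf : ‖A (x - a) - f - (1 / 2 : ℝ) • Q (x - a) (x - a)‖ ≤ C * ‖x - a‖ ^ 3)
    (hxa : ‖x - a‖ ≤ 1) :
    ‖x - Ring.inverse A f - a‖ ≤ 2 * C ^ 2 * ‖x - a‖ ^ 2 := by
  have hC : 0 ≤ C := (norm_nonneg _).trans hB
  have hquad : ‖(1 / 2 : ℝ) • Q (x - a) (x - a)‖ ≤ C * ‖x - a‖ ^ 2 := calc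
    _ = 1 / 2 * ‖Q (x - a) (x - a)‖ := by rw [norm_smul]; norm_num
    _ ≤ 1 / 2 * (C * ‖x - a‖ * ‖x - a‖) := by
      gcongr; exact Q.le_of_opNorm₂_le_of_le hQ le_rfl le_rfl
    _ ≤ C * ‖x - a‖ ^ 2 := by nlinarith [mul_nonneg hC (sq_nonneg ‖x - a‖)]
  have hcube : ‖x - a‖ ^ 3 ≤ ‖x - a‖ ^ 2 := pow_le_pow_of_le_one (norm_nonneg _) hxa (by norm_num)
  have hres : ‖A (x - a) - f‖ ≤ 2 * C * ‖x - a‖ ^ 2 := calc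
    ‖A (x - a) - f‖ ≤ ‖A (x - a) - f - (1 / 2 : ℝ) • Q (x - a) (x - a)‖
        + ‖(1 / 2 : ℝ) • Q (x - a) (x - a)‖ := norm_le_norm_sub_add _ _
    _ ≤ C * ‖x - a‖ ^ 2 + C * ‖x - a‖ ^ 2 := add_le_add (hf.trans (by gcongr)) hquad
    _ = 2 * C * ‖x - a‖ ^ 2 := by ring
  rw [newton_step_sub_eq hA]
  calc _ ≤ C * (2 * C * ‖x - a‖ ^ 2) := (Ring.inverse A).le_of_opNorm_le_of_le hB hres
    _ = 2 * C ^ 2 * ‖x - a‖ ^ 2 := by ring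

theorem norm_newton_correction_le (hA : IsUnit A) (hB : ‖Ring.inverse A‖ ≤ C) (hQ : ‖Q‖ ≤ C)
    (hf : ‖A (x - a) - f - (1 / 2 : ℝ) • Q (x - a) (x - a)‖ ≤ C * ‖x - a‖ ^ 3)
    (hxa : ‖x - a‖ ≤ 1) :
    ‖Ring.inverse A f‖ ≤ (1 + 2 * C ^ 2) * ‖x - a‖ := calc
  _ = ‖(x - a) - (x - Ring.inverse A f - a)‖ := by congr 1; abel
  _ ≤ ‖x - a‖ + 2 * C ^ 2 * ‖x - a‖ ^ 2 :=
    (norm_sub_le _ _).trans (by gcongr; exact norm_newton_step_sub_le hA hB hQ hf hxa)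
  _ ≤ (1 + 2 * C ^ 2) * ‖x - a‖ := by
    nlinarith [mul_nonneg (mul_nonneg (sq_nonneg C) (norm_nonneg (x - a))) (sub_nonneg.2 hxa)]

-- With `e = x - a` and `v = A⁻¹ f`, the quadratic terms `½ Q e e` and `½ Q v v` cancel up to
-- `½ (Q (e - v) e + Q v (e - v))`, so every summand is cubic in `‖e‖`.
theorem chun_step_sub_eq (hA : IsUnit A) (A' : E →L[ℝ] E) :
    x - (1 / 2 : ℝ) • (((3 : ℝ) • ContinuousLinearMap.id ℝ E - (Ring.inverse A).comp A')
      (Ring.inverse A f)) - a =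
    Ring.inverse A ((A (x - a) - f - (1 / 2 : ℝ) • Q (x - a) (x - a))
      + (1 / 2 : ℝ) • (A' - A + Q (Ring.inverse A f)) (Ring.inverse A f)
      + (1 / 2 : ℝ) • (Q (x - Ring.inverse A f - a) (x - a)
        + Q (Ring.inverse A f) (x - Ring.inverse A f - a))) := by
  simp only [map_add, map_sub, map_smul, sub_apply, add_apply, smul_apply, comp_apply,
    coe_id', id_eq, ringInverse_apply_self hA]
  module

theorem norm_chun_step_sub_le (hA : IsUnit A) (hB : ‖Ring.inverse A‖ ≤ C) (hQ : ‖Q‖ ≤ C)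
    (hf : ‖A (x - a) - f - (1 / 2 : ℝ) • Q (x - a) (x - a)‖ ≤ C * ‖x - a‖ ^ 3)
    (hA' : ‖A' - A + Q (Ring.inverse A f)‖ ≤ C * ‖Ring.inverse A f‖ ^ 2)
    (hxa : ‖x - a‖ ≤ 1) :
    ‖x - (1 / 2 : ℝ) • (((3 : ℝ) • ContinuousLinearMap.id ℝ E - (Ring.inverse A).comp A')
      (Ring.inverse A f)) - a‖ ≤ 3 * C ^ 2 * (1 + 2 * C ^ 2) ^ 3 * ‖x - a‖ ^ 3 := by
  have hC : 0 ≤ C := (norm_nonneg _).trans hB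
  rw [chun_step_sub_eq hA A' (Q := Q)]
  set v := Ring.inverse A f
  set r := ‖x - a‖
  set c := 2 * C ^ 2
  have hc : 0 ≤ c := by positivity
  have hw : ‖x - v - a‖ ≤ c * r ^ 2 := norm_newton_step_sub_le hA hB hQ hf hxa
  have hv : ‖v‖ ≤ (1 + c) * r := norm_newton_correction_le hA hB hQ hf hxa
  have h2 : ‖(A' - A + Q v) v‖ ≤ C * ((1 + c) * r) ^ 3 := calc
    ‖(A' - A + Q v) v‖ ≤ C * ‖v‖ ^ 2 * ‖v‖ := le_of_opNorm_le_of_le _ hA' le_rfl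
    _ ≤ C * ((1 + c) * r) ^ 3 := by rw [mul_assoc, ← pow_succ]; gcongr
  have h3 : ‖Q (x - v - a) (x - a)‖ ≤ C * (c * r ^ 2) * r := Q.le_of_opNorm₂_le_of_le hQ hw le_rfl
  have h4 : ‖Q v (x - v - a)‖ ≤ C * ((1 + c) * r) * (c * r ^ 2) :=
    Q.le_of_opNorm₂_le_of_le hQ hv hw
  have hu : ‖(A (x - a) - f - (1 / 2 : ℝ) • Q (x - a) (x - a)) + (1 / 2 : ℝ) • (A' - A + Q v) v
      + (1 / 2 : ℝ) • (Q (x - v - a) (x - a) + Q v (x - v - a))‖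
      ≤ C * r ^ 3 * (1 + (1 + c) ^ 3 / 2 + c * (2 + c) / 2) := calc
    _ ≤ C * r ^ 3 + 1 / 2 * (C * ((1 + c) * r) ^ 3)
        + 1 / 2 * (C * (c * r ^ 2) * r + C * ((1 + c) * r) * (c * r ^ 2)) := by
      refine (norm_add₃_le ..).trans ?_
      rw [norm_smul, norm_smul, Real.norm_of_nonneg (by norm_num : (0 : ℝ) ≤ 1 / 2)]
      gcongr
      exact (norm_add_le _ _).trans (add_le_add h3 h4)
    _ = _ := by ring
  have hpoly : 1 + (1 + c) ^ 3 / 2 + c * (2 + c) / 2 ≤ 3 * (1 + c) ^ 3 := by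
    nlinarith [pow_nonneg hc 2, pow_nonneg hc 3]
  calc _ ≤ C * (C * r ^ 3 * (1 + (1 + c) ^ 3 / 2 + c * (2 + c) / 2)) :=
        le_of_opNorm_le_of_le _ hB hu
    _ ≤ C * (C * r ^ 3 * (3 * (1 + c) ^ 3)) := by gcongr
    _ = 3 * C ^ 2 * (1 + c) ^ 3 * r ^ 3 := by ring

end ChunStep

theorem ContDiffAt.exists_ball_chun_estimates [CompleteSpace E] {F : E → E} {α : E}
    (hF : ContDiffAt ℝ 3 F α) (hroot : F α = 0) (hA : IsUnit (fderiv ℝ F α)) :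
    ∃ r > 0, ∃ C : ℝ, ∀ x ∈ ball α r,
      IsUnit (fderiv ℝ F x) ∧ ‖Ring.inverse (fderiv ℝ F x)‖ ≤ C ∧
      ‖fderiv ℝ (fderiv ℝ F) x‖ ≤ C ∧
      ‖fderiv ℝ F x (x - α) - F x
          - (1 / 2 : ℝ) • fderiv ℝ (fderiv ℝ F) x (x - α) (x - α)‖ ≤ C * ‖x - α‖ ^ 3 ∧
      ∀ y ∈ ball α r,
        ‖fderiv ℝ F y - fderiv ℝ F x - fderiv ℝ (fderiv ℝ F) x (y - x)‖ ≤ C * ‖y - x‖ ^ 2 := by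
  obtain ⟨r₁, hr₁, K, htaylor⟩ := hF.exists_ball_forall_taylor_le
  have hbounds := ((hF.continuousAt_fderiv (by simp)).eventually_isUnit_and_norm_ringInverse_lt
    hA).and (((hF.fderiv_right (m := 1) (by norm_num)).continuousAt_fderiv (by simp)).norm.eventually
      (gt_mem_nhds (lt_add_one ‖fderiv ℝ (fderiv ℝ F) α‖)))
  obtain ⟨r₂, hr₂, hball⟩ := Metric.eventually_nhds_iff_ball.1 hbounds
  set C := max K (max (‖Ring.inverse (fderiv ℝ F α)‖ + 1) (‖fderiv ℝ (fderiv ℝ F) α‖ + 1))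
  have hKC : K ≤ C := le_max_left _ _
  refine ⟨min r₁ r₂, lt_min hr₁ hr₂, C, fun x hx ↦ ?_⟩
  have hx₁ : x ∈ ball α r₁ := ball_subset_ball (min_le_left _ _) hx
  obtain ⟨⟨hunit, hinv⟩, hsecond⟩ := hball x (ball_subset_ball (min_le_right _ _) hx)
  refine ⟨hunit, hinv.le.trans ((le_max_left _ _).trans (le_max_right _ _)),
    hsecond.le.trans ((le_max_right _ _).trans (le_max_right _ _)), ?_, fun y hy ↦ ?_⟩
  · have hroot_taylor := (htaylor x hx₁ α (mem_ball_self hr₁)).1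
    rw [hroot, ← neg_sub x α, norm_neg] at hroot_taylor
    simp only [map_neg, neg_apply, neg_neg] at hroot_taylor
    calc _ = _ := by congr 1; abel
      _ ≤ K * ‖x - α‖ ^ 3 := hroot_taylor
      _ ≤ C * ‖x - α‖ ^ 3 := by gcongr
  · exact (htaylor x hx₁ y (ball_subset_ball (min_le_left _ _) hy)).2.trans (by gcongr)

theorem multivariate_chun_third_order_general (n : ℕ) (F : (Fin n → ℝ) → (Fin n → ℝ))
    (α : Fin n → ℝ) (D : Set (Fin n → ℝ)) (hDnhds : D ∈ nhds α)
    (hF : ContDiffOn ℝ 4 F D) (hroot : F α = 0) (hA : IsUnit (fderiv ℝ F α)) :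
    ∃ δ > (0 : ℝ), ∃ K > (0 : ℝ), ∀ X : Fin n → ℝ, ‖X - α‖ < δ →
      ‖(X - (1 / 2 : ℝ) •
          (((3 : ℝ) • ContinuousLinearMap.id ℝ (Fin n → ℝ)
              - (Ring.inverse (fderiv ℝ F X)).comp
                  (fderiv ℝ F (X - (Ring.inverse (fderiv ℝ F X)) (F X))))
            ((Ring.inverse (fderiv ℝ F X)) (F X)))) - α‖
        ≤ K * ‖X - α‖ ^ 3 := by
  obtain ⟨r, hr, C, hC⟩ :=
    ((hF.contDiffAt hDnhds).of_le (by norm_num)).exists_ball_chun_estimates hroot hA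
  refine ⟨min r (min 1 (1 / (2 * C ^ 2 + 1))), by positivity,
    3 * C ^ 2 * (1 + 2 * C ^ 2) ^ 3 + 1, by positivity, fun X hX ↦ ?_⟩
  obtain ⟨hXr, hX1, hXC⟩ : ‖X - α‖ < r ∧ ‖X - α‖ < 1 ∧ ‖X - α‖ < 1 / (2 * C ^ 2 + 1) := by
    simpa only [lt_min_iff] using hX
  obtain ⟨hunit, hB, hQ, hf, hA'⟩ := hC X (mem_ball_iff_norm.2 hXr)
  have hY : X - Ring.inverse (fderiv ℝ F X) (F X) ∈ ball α r := by
    rw [lt_div_iff₀ (by positivity)] at hXC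
    rw [mem_ball_iff_norm]
    calc _ ≤ 2 * C ^ 2 * ‖X - α‖ ^ 2 := norm_newton_step_sub_le hunit hB hQ hf hX1.le
      _ ≤ ‖X - α‖ := by nlinarith [norm_nonneg (X - α)]
      _ < r := hXr
  calc _ ≤ 3 * C ^ 2 * (1 + 2 * C ^ 2) ^ 3 * ‖X - α‖ ^ 3 :=
        norm_chun_step_sub_le hunit hB hQ hf (by simpa using hA' _ hY) hX1.le
    _ ≤ _ := by gcongr; linarith

/-- Theorem 2.1: the multivariate Chun method has third-order convergence. -/
theorem multivariate_chun_third_order (n : ℕ) (F : (Fin n → ℝ) → (Fin n → ℝ))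
    (α : Fin n → ℝ) (D : Set (Fin n → ℝ)) (hD : Convex ℝ D) (hDnhds : D ∈ nhds α)
    (hF : ContDiffOn ℝ 4 F D) (hroot : F α = 0) (hA : IsUnit (fderiv ℝ F α)) :
    ∃ δ > (0 : ℝ), ∃ K > (0 : ℝ), ∀ X : Fin n → ℝ, ‖X - α‖ < δ →
      ‖(X - (1 / 2 : ℝ) •
          (((3 : ℝ) • ContinuousLinearMap.id ℝ (Fin n → ℝ)
              - (Ring.inverse (fderiv ℝ F X)).comp
                  (fderiv ℝ F (X - (Ring.inverse (fderiv ℝ F X)) (F X))))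
            ((Ring.inverse (fderiv ℝ F X)) (F X)))) - α‖
        ≤ K * ‖X - α‖ ^ 3 :=
  multivariate_chun_third_order_general n F α D hDnhds hF hroot hA
end
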